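/- Let φ : (0,∞) → ℂ be Schwartz on ℝ₊. Then: (a) for every s ∈ ℂ the integral 𝓜φ(s) = ∫_0^∞ φ(x) x^{s−1} dx converges absolutely; (b) the function s ↦ 𝓜φ(s) is entire; (c) for every α ∈ ℕ and all reals a ≤ b there exists C > 0 such that |𝓜φ(s)| ≤ C·(1 + |Im s|)^{−α} for all s with a ≤ Re s ≤ b. -/

import Mathlib

open MeasureTheory

/-- A function `φ : (0,∞) → ℂ` (extended to `ℝ`) is *Schwartz on ℝ₊* if it is smooth on
`(0,∞)` and for all `α ∈ ℕ`, `β ∈ ℤ`, `sup_{x>0} x^β |φ^{(α)}(x)| < ∞`. -/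
def SchwartzRPlus (φ : ℝ → ℂ) : Prop :=
  ContDiffOn ℝ (⊤ : ℕ∞) φ (Set.Ioi 0) ∧
    ∀ (α : ℕ) (β : ℤ), ∃ C : ℝ, ∀ x : ℝ, 0 < x →
      x ^ β * ‖iteratedDeriv α φ x‖ ≤ C

section Stmt5AuxSection
open Set Filter Asymptotics Topology

namespace Stmt5Aux

lemma contDiffOn_iter {φ : ℝ → ℂ} (h : ContDiffOn ℝ (⊤ : ℕ∞) φ (Set.Ioi 0)) (n : ℕ) :
    ContDiffOn ℝ (⊤ : ℕ∞) (iteratedDeriv n φ) (Set.Ioi 0) := by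
  induction n generalizing φ with
  | zero => simpa [iteratedDeriv_zero] using h
  | succ n ih =>
    rw [iteratedDeriv_succ']
    exact ih ((contDiffOn_infty_iff_deriv_of_isOpen isOpen_Ioi).mp h).2

lemma diffAt {φ : ℝ → ℂ} (h : ContDiffOn ℝ (⊤ : ℕ∞) φ (Set.Ioi 0)) (n : ℕ) {x : ℝ}
    (hx : 0 < x) : DifferentiableAt ℝ (iteratedDeriv n φ) x :=
  ((contDiffOn_iter h n).differentiableOn (by simp)).differentiableAt
    (Ioi_mem_nhds hx)

lemma bound {φ : ℝ → ℂ} (hφ : SchwartzRPlus φ) (α : ℕ) (β : ℤ) :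
    ∃ C : ℝ, 0 ≤ C ∧ ∀ x : ℝ, 0 < x →
      ‖iteratedDeriv α φ x‖ ≤ C * x ^ (-(β:ℝ)) := by
  obtain ⟨C, hC⟩ := hφ.2 α β
  refine ⟨max C 0, le_max_right _ _, fun x hx => ?_⟩
  have hxz : (0:ℝ) < x ^ (β:ℝ) := Real.rpow_pos_of_pos hx _
  have h1 : x ^ (β:ℝ) * ‖iteratedDeriv α φ x‖ ≤ max C 0 := by
    rw [Real.rpow_intCast]
    exact (hC x hx).trans (le_max_left _ _)
  have h2 : ‖iteratedDeriv α φ x‖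
      = x ^ (-(β:ℝ)) * (x ^ (β:ℝ) * ‖iteratedDeriv α φ x‖) := by
    rw [← mul_assoc, ← Real.rpow_add hx]
    simp
  rw [h2, mul_comm (max C 0) _]
  exact mul_le_mul_of_nonneg_left h1 (Real.rpow_pos_of_pos hx _).le

lemma isBigO_top {φ : ℝ → ℂ} (hφ : SchwartzRPlus φ) (α : ℕ) (r : ℝ) :
    (iteratedDeriv α φ) =O[atTop] (fun x : ℝ => x ^ r) := by
  obtain ⟨C, hC0, hC⟩ := bound hφ α ⌈-r⌉
  rw [isBigO_iff]
  refine ⟨C, ?_⟩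
  filter_upwards [eventually_ge_atTop (1:ℝ)] with x hx1
  have hx : (0:ℝ) < x := lt_of_lt_of_le one_pos hx1
  have h1 : ‖iteratedDeriv α φ x‖ ≤ C * x ^ (-(⌈-r⌉:ℝ)) := hC x hx
  have h2 : x ^ (-(⌈-r⌉:ℝ)) ≤ x ^ r :=
    Real.rpow_le_rpow_of_exponent_le hx1 (by have := Int.le_ceil (-r); linarith)
  have : ‖x ^ r‖ = x ^ r := by
    rw [Real.norm_eq_abs, abs_of_nonneg (Real.rpow_nonneg hx.le r)]
  rw [this]
  calc ‖iteratedDeriv α φ x‖ ≤ C * x ^ (-(⌈-r⌉:ℝ)) := h1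
    _ ≤ C * x ^ r := mul_le_mul_of_nonneg_left h2 hC0

lemma isBigO_zero {φ : ℝ → ℂ} (hφ : SchwartzRPlus φ) (α : ℕ) (r : ℝ) :
    (iteratedDeriv α φ) =O[𝓝[>] (0:ℝ)] (fun x : ℝ => x ^ r) := by
  obtain ⟨C, hC0, hC⟩ := bound hφ α ⌊-r⌋
  rw [isBigO_iff]
  refine ⟨C, ?_⟩
  filter_upwards [Ioc_mem_nhdsGT_of_mem (by exact ⟨le_refl (0:ℝ), one_pos⟩ : (0:ℝ) ∈ Set.Ico 0 1)]
    with x hx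
  have hx0 : (0:ℝ) < x := hx.1
  have h1 : ‖iteratedDeriv α φ x‖ ≤ C * x ^ (-(⌊-r⌋:ℝ)) := hC x hx0
  have h2 : x ^ (-(⌊-r⌋:ℝ)) ≤ x ^ r :=
    Real.rpow_le_rpow_of_exponent_ge hx0 hx.2 (by have := Int.floor_le (-r); linarith)
  have hnorm : ‖x ^ r‖ = x ^ r := by
    rw [Real.norm_eq_abs, abs_of_nonneg (Real.rpow_nonneg hx0.le r)]
  rw [hnorm]
  calc ‖iteratedDeriv α φ x‖ ≤ C * x ^ (-(⌊-r⌋:ℝ)) := h1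
    _ ≤ C * x ^ r := mul_le_mul_of_nonneg_left h2 hC0


lemma locint {φ : ℝ → ℂ} (hφ : SchwartzRPlus φ) : LocallyIntegrableOn φ (Set.Ioi 0) :=
  (hφ.1.continuousOn).locallyIntegrableOn measurableSet_Ioi

lemma conv {φ : ℝ → ℂ} (hφ : SchwartzRPlus φ) (s : ℂ) :
    IntegrableOn (fun x : ℝ => (x : ℂ) ^ (s - 1) • φ x) (Set.Ioi 0) := by
  have h1 := isBigO_top hφ 0 (-(s.re + 1))
  have h2 := isBigO_zero hφ 0 (-(s.re - 1))
  rw [iteratedDeriv_zero] at h1 h2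
  exact mellinConvergent_of_isBigO_rpow (a := s.re + 1) (b := s.re - 1) (locint hφ)
    h1 (by linarith) h2 (by linarith)

lemma diff {φ : ℝ → ℂ} (hφ : SchwartzRPlus φ) : Differentiable ℂ (mellin φ) := by
  intro s
  have h1 := isBigO_top hφ 0 (-(s.re + 1))
  have h2 := isBigO_zero hφ 0 (-(s.re - 1))
  rw [iteratedDeriv_zero] at h1 h2
  exact mellin_differentiableAt_of_isBigO_rpow (a := s.re + 1) (b := s.re - 1) (locint hφ)
    h1 (by linarith) h2 (by linarith)


lemma iter_formula {φ : ℝ → ℂ} (h : ContDiffOn ℝ (⊤ : ℕ∞) φ (Set.Ioi 0)) (n : ℕ) {x : ℝ}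
    (hx : 0 < x) :
    iteratedDeriv n (fun y : ℝ => (y:ℂ) * deriv φ y) x
      = x * iteratedDeriv (n+1) φ x + n * iteratedDeriv n φ x := by
  induction n generalizing x with
  | zero => simp [iteratedDeriv_zero, iteratedDeriv_one]
  | succ n ih =>
    have hev : iteratedDeriv n (fun y : ℝ => (y:ℂ) * deriv φ y)
        =ᶠ[𝓝 x] fun y : ℝ => (y:ℂ) * iteratedDeriv (n+1) φ y + n * iteratedDeriv n φ y := by
      filter_upwards [Ioi_mem_nhds hx] with y hy using ih hy
    rw [iteratedDeriv_succ, hev.deriv_eq]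
    have h1 : HasDerivAt (fun y : ℝ => (y:ℂ)) 1 x := by
      exact Complex.ofRealCLM.hasDerivAt
    have h2 : HasDerivAt (iteratedDeriv (n+1) φ) (iteratedDeriv (n+2) φ x) x := by
      have hh := (diffAt h (n+1) hx).hasDerivAt
      have e : iteratedDeriv (n+2) φ x = deriv (iteratedDeriv (n+1) φ) x :=
        congrFun (iteratedDeriv_succ (n := n+1) (f := φ)) x
      rw [e]; exact hh
    have h3 : HasDerivAt (iteratedDeriv n φ) (iteratedDeriv (n+1) φ x) x := by
      have hh := (diffAt h n hx).hasDerivAt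
      have e : iteratedDeriv (n+1) φ x = deriv (iteratedDeriv n φ) x :=
        congrFun (iteratedDeriv_succ (n := n) (f := φ)) x
      rw [e]; exact hh
    have h4 := ((h1.mul h2).add (h3.const_mul (n:ℂ))).deriv
    erw [h4]
    push_cast
    ring

lemma schwartz_D {φ : ℝ → ℂ} (hφ : SchwartzRPlus φ) :
    SchwartzRPlus (fun x : ℝ => (x:ℂ) * deriv φ x) := by
  constructor
  · have hd : ContDiffOn ℝ (⊤ : ℕ∞) (deriv φ) (Set.Ioi 0) :=
      ((contDiffOn_infty_iff_deriv_of_isOpen isOpen_Ioi).mp hφ.1).2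
    exact (Complex.ofRealCLM.contDiff.contDiffOn (s := Set.Ioi 0)).mul hd
  · intro α β
    obtain ⟨C1, hC1⟩ := hφ.2 (α+1) (β+1)
    obtain ⟨C2, hC2⟩ := hφ.2 α β
    refine ⟨C1 + α * C2, fun x hx => ?_⟩
    have hxz : ∀ m : ℤ, (0:ℝ) < x ^ m := fun m => zpow_pos hx m
    have hformula := iter_formula hφ.1 α hx
    rw [hformula]
    have htri : ‖(x:ℂ) * iteratedDeriv (α+1) φ x + α * iteratedDeriv α φ x‖
        ≤ x * ‖iteratedDeriv (α+1) φ x‖ + α * ‖iteratedDeriv α φ x‖ := by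
      refine (norm_add_le _ _).trans_eq ?_
      rw [norm_mul, norm_mul]
      simp [abs_of_pos hx]
    have hC2' : (0:ℝ) ≤ C2 := le_trans (by positivity) (hC2 x hx)
    calc x ^ β * ‖(x:ℂ) * iteratedDeriv (α+1) φ x + α * iteratedDeriv α φ x‖
        ≤ x ^ β * (x * ‖iteratedDeriv (α+1) φ x‖
            + α * ‖iteratedDeriv α φ x‖) :=
          mul_le_mul_of_nonneg_left htri (hxz β).le
      _ = x ^ (β+1) * ‖iteratedDeriv (α+1) φ x‖
            + α * (x ^ β * ‖iteratedDeriv α φ x‖) := by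
          rw [zpow_add_one₀ (ne_of_gt hx)]; ring
      _ ≤ C1 + α * C2 := by
          have := hC1 x hx
          have := hC2 x hx
          have hα : (0:ℝ) ≤ α := Nat.cast_nonneg α
          nlinarith [hC2 x hx, hC1 x hx]


lemma ftc_both {F F' : ℝ → ℂ} (hder : ∀ x ∈ Set.Ioi (0:ℝ), HasDerivAt F (F' x) x)
    (hint : IntegrableOn F' (Set.Ioi 0)) (h0 : Tendsto F (𝓝[>] 0) (𝓝 0))
    (htop : Tendsto F atTop (𝓝 0)) : ∫ x in Set.Ioi (0:ℝ), F' x = 0 := by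
  have key : ∀ ε : ℝ, 0 < ε → ∫ x in Set.Ioi ε, F' x = - F ε := by
    intro ε hε
    rw [integral_Ioi_of_hasDerivAt_of_tendsto
      ((hder ε hε).continuousAt.continuousWithinAt)
      (fun x hx => hder x (hε.trans hx))
      (hint.mono_set (Ioi_subset_Ioi hε.le)) htop]
    ring
  have hUnion : (⋃ n : ℕ, Set.Ioi ((1:ℝ)/(n+1))) = Set.Ioi (0:ℝ) := by
    ext x
    simp only [Set.mem_iUnion, Set.mem_Ioi]
    constructor
    · rintro ⟨n, hn⟩
      exact lt_trans (by positivity) hn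
    · intro hx
      exact exists_nat_one_div_lt hx
  have hmono : Monotone (fun n : ℕ => Set.Ioi ((1:ℝ)/(n+1))) := by
    intro n m hnm
    apply Ioi_subset_Ioi
    apply one_div_le_one_div_of_le (by positivity)
    have : (n:ℝ) ≤ m := Nat.cast_le.mpr hnm
    linarith
  have h1 : Tendsto (fun n : ℕ => ∫ x in Set.Ioi ((1:ℝ)/(n+1)), F' x) atTop
      (𝓝 (∫ x in Set.Ioi (0:ℝ), F' x)) := by
    have := tendsto_setIntegral_of_monotone (s := fun n : ℕ => Set.Ioi ((1:ℝ)/(n+1)))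
      (fun n => measurableSet_Ioi) hmono (by rw [hUnion]; exact hint)
    rwa [hUnion] at this
  have hseq : Tendsto (fun n : ℕ => (1:ℝ)/(n+1)) atTop (𝓝[>] 0) := by
    apply tendsto_nhdsWithin_of_tendsto_nhds_of_eventually_within
    · exact tendsto_one_div_add_atTop_nhds_zero_nat
    · filter_upwards with n
      have : (0:ℝ) < 1/(n+1) := by positivity
      exact this
  have h2 : Tendsto (fun n : ℕ => - F ((1:ℝ)/(n+1))) atTop (𝓝 0) := by
    have := (h0.comp hseq).neg
    simpa using this
  have heq : (fun n : ℕ => ∫ x in Set.Ioi ((1:ℝ)/(n+1)), F' x)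
      = fun n : ℕ => - F ((1:ℝ)/(n+1)) := by
    funext n
    exact key _ (by positivity)
  rw [heq] at h1
  exact tendsto_nhds_unique h1 h2


lemma strip_bound {φ : ℝ → ℂ} (hφ : SchwartzRPlus φ) (a b : ℝ) :
    ∃ M : ℝ, 0 ≤ M ∧ ∀ s : ℂ, a ≤ s.re → s.re ≤ b →
      ‖mellin φ s‖ ≤ M := by
  set g : ℝ → ℝ := fun x =>
    ‖(x:ℂ) ^ ((a:ℂ) - 1) • φ x‖ + ‖(x:ℂ) ^ ((b:ℂ) - 1) • φ x‖ with hg_def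
  have hg : IntegrableOn g (Set.Ioi 0) := (conv hφ a).norm.add (conv hφ b).norm
  refine ⟨∫ x in Set.Ioi (0:ℝ), g x, integral_nonneg (fun x => by positivity), ?_⟩
  intro s ha hb
  have hpt : ∀ x ∈ Set.Ioi (0:ℝ), ‖(x:ℂ) ^ (s - 1) • φ x‖ ≤ g x := by
    intro x hx
    have hx0 : (0:ℝ) < x := hx
    have hnorm : ∀ t : ℂ, ‖(x:ℂ) ^ (t - 1) • φ x‖ = x ^ (t.re - 1) * ‖φ x‖ := by
      intro t
      rw [norm_smul,
        Complex.norm_cpow_eq_rpow_re_of_pos hx0]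
      simp
    rw [hnorm s]
    have hgx : g x = x ^ (a - 1) * ‖φ x‖ + x ^ (b - 1) * ‖φ x‖ := by
      simp only [hg_def]
      rw [show ‖(x:ℂ) ^ ((a:ℂ) - 1) • φ x‖ = x ^ (a - 1) * ‖φ x‖ from by rw [hnorm]; norm_num,
        show ‖(x:ℂ) ^ ((b:ℂ) - 1) • φ x‖ = x ^ (b - 1) * ‖φ x‖ from by rw [hnorm]; norm_num]
    rw [hgx]
    rcases le_total x 1 with hx1 | hx1
    · have : x ^ (s.re - 1) ≤ x ^ (a - 1) :=
        Real.rpow_le_rpow_of_exponent_ge hx0 hx1 (by linarith)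
      calc x ^ (s.re - 1) * ‖φ x‖ ≤ x ^ (a - 1) * ‖φ x‖ :=
            mul_le_mul_of_nonneg_right this (norm_nonneg _)
        _ ≤ _ := le_add_of_nonneg_right (by positivity)
    · have : x ^ (s.re - 1) ≤ x ^ (b - 1) :=
        Real.rpow_le_rpow_of_exponent_le hx1 (by linarith)
      calc x ^ (s.re - 1) * ‖φ x‖ ≤ x ^ (b - 1) * ‖φ x‖ :=
            mul_le_mul_of_nonneg_right this (norm_nonneg _)
        _ ≤ _ := le_add_of_nonneg_left (by positivity)
  calc ‖mellin φ s‖ = ‖∫ x in Set.Ioi (0:ℝ), (x:ℂ) ^ (s - 1) • φ x‖ := rfl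
    _ ≤ ∫ x in Set.Ioi (0:ℝ), ‖(x:ℂ) ^ (s - 1) • φ x‖ := norm_integral_le_integral_norm _
    _ ≤ ∫ x in Set.Ioi (0:ℝ), g x :=
        setIntegral_mono_on (conv hφ s).norm hg measurableSet_Ioi hpt


lemma tendsto_F_top {φ : ℝ → ℂ} (hφ : SchwartzRPlus φ) (s : ℂ) :
    Tendsto (fun x : ℝ => (x:ℂ) ^ s * φ x) atTop (𝓝 0) := by
  obtain ⟨C, hC0, hC⟩ := bound hφ 0 (⌈s.re⌉ + 1)
  apply squeeze_zero_norm' (a := fun x : ℝ => C * x ^ (s.re - (⌈s.re⌉ + 1 : ℤ)))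
  · filter_upwards [eventually_gt_atTop (0:ℝ)] with x hx
    have h1 : ‖(x:ℂ) ^ s * φ x‖ = x ^ s.re * ‖φ x‖ := by
      rw [norm_mul, Complex.norm_cpow_eq_rpow_re_of_pos hx]
    rw [h1]
    have h2 := hC x hx
    rw [iteratedDeriv_zero] at h2
    calc x ^ s.re * ‖φ x‖
        ≤ x ^ s.re * (C * x ^ (-((⌈s.re⌉ + 1 : ℤ) : ℝ))) :=
          mul_le_mul_of_nonneg_left h2 (Real.rpow_nonneg hx.le _)
      _ = C * x ^ (s.re - (⌈s.re⌉ + 1 : ℤ)) := by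
          have hx0' : (0:ℝ) < x := hx
          have e := Real.rpow_add hx0' s.re (-((⌈s.re⌉ + 1 : ℤ):ℝ))
          rw [← sub_eq_add_neg] at e
          rw [e]; ring
  · have hneg : s.re - ((⌈s.re⌉ + 1 : ℤ) : ℝ) < 0 := by
      have := Int.le_ceil s.re
      push_cast
      linarith
    have := (tendsto_rpow_neg_atTop (by linarith : (0:ℝ) < -(s.re - ((⌈s.re⌉ + 1 : ℤ) : ℝ)))).const_mul C
    simpa using this

lemma tendsto_F_zero {φ : ℝ → ℂ} (hφ : SchwartzRPlus φ) (s : ℂ) :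
    Tendsto (fun x : ℝ => (x:ℂ) ^ s * φ x) (𝓝[>] 0) (𝓝 0) := by
  obtain ⟨C, hC0, hC⟩ := bound hφ 0 (⌊s.re⌋ - 1)
  apply squeeze_zero_norm' (a := fun x : ℝ => C * x ^ (s.re - (⌊s.re⌋ - 1 : ℤ)))
  · filter_upwards [self_mem_nhdsWithin] with x hx
    have hx0 : (0:ℝ) < x := hx
    have h1 : ‖(x:ℂ) ^ s * φ x‖ = x ^ s.re * ‖φ x‖ := by
      rw [norm_mul, Complex.norm_cpow_eq_rpow_re_of_pos hx0]
    rw [h1]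
    have h2 := hC x hx0
    rw [iteratedDeriv_zero] at h2
    calc x ^ s.re * ‖φ x‖
        ≤ x ^ s.re * (C * x ^ (-((⌊s.re⌋ - 1 : ℤ) : ℝ))) :=
          mul_le_mul_of_nonneg_left h2 (Real.rpow_nonneg hx0.le _)
      _ = C * x ^ (s.re - (⌊s.re⌋ - 1 : ℤ)) := by
          have hx0' : (0:ℝ) < x := hx0
          have e := Real.rpow_add hx0' s.re (-((⌊s.re⌋ - 1 : ℤ):ℝ))
          rw [← sub_eq_add_neg] at e
          rw [e]; ring
  · have hpos : (0:ℝ) < s.re - ((⌊s.re⌋ - 1 : ℤ) : ℝ) := by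
      have := Int.floor_le s.re
      push_cast
      linarith
    have h := (Real.continuousAt_rpow_const 0 _ (Or.inr hpos.le)).tendsto
    rw [Real.zero_rpow hpos.ne'] at h
    have h2 : Tendsto (fun x : ℝ => x ^ (s.re - ((⌊s.re⌋ - 1 : ℤ):ℝ))) (𝓝[>] 0) (𝓝 0) :=
      h.mono_left nhdsWithin_le_nhds
    have := h2.const_mul C
    simpa using this

lemma mellin_deriv_rel {φ : ℝ → ℂ} (hφ : SchwartzRPlus φ) (s : ℂ) :
    s * mellin φ s = - mellin (fun x : ℝ => (x:ℂ) * deriv φ x) s := by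
  set ψ : ℝ → ℂ := fun x => (x:ℂ) * deriv φ x with hψ_def
  have hψ : SchwartzRPlus ψ := schwartz_D hφ
  set F : ℝ → ℂ := fun x => (x:ℂ) ^ s * φ x with hF_def
  set F' : ℝ → ℂ := fun x => s • ((x:ℂ) ^ (s - 1) • φ x) + (x:ℂ) ^ (s - 1) • ψ x with hF'_def
  have hder : ∀ x ∈ Set.Ioi (0:ℝ), HasDerivAt F (F' x) x := by
    intro x hx
    have hx0 : (0:ℝ) < x := hx
    have hxne : (x:ℂ) ≠ 0 := by
      simpa using hx0.ne'
    have h1 : HasDerivAt (fun y : ℝ => (y:ℂ) ^ s) (s * (x:ℂ) ^ (s-1)) x :=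
      ((Complex.hasStrictDerivAt_cpow_const (c := s)
        (Complex.ofReal_mem_slitPlane.mpr hx0)).hasDerivAt).comp_ofReal
    have h2 : HasDerivAt φ (deriv φ x) x :=
      ((hφ.1.differentiableOn (by simp)).differentiableAt
        (Ioi_mem_nhds hx0)).hasDerivAt
    have h3 : HasDerivAt F (s * (x:ℂ) ^ (s - 1) * φ x + (x:ℂ) ^ s * deriv φ x) x := h1.mul h2
    have hxs : (x:ℂ) ^ s = (x:ℂ) ^ (s-1) * x := by
      have h := Complex.cpow_add (s-1) 1 hxne
      simpa using h
    convert h3 using 1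
    simp only [hF'_def, hψ_def, smul_eq_mul, hxs]
    ring
  have hint : IntegrableOn F' (Set.Ioi 0) := ((conv hφ s).smul s).add (conv hψ s)
  have key : ∫ x in Set.Ioi (0:ℝ), F' x = 0 :=
    ftc_both hder hint (tendsto_F_zero hφ s) (tendsto_F_top hφ s)
  have h1int : IntegrableOn (fun x : ℝ => s • ((x:ℂ) ^ (s - 1) • φ x)) (Set.Ioi 0) :=
    (conv hφ s).smul s
  have key2 : ∫ x in Set.Ioi (0:ℝ),
      (s • ((x:ℂ) ^ (s - 1) • φ x) + (x:ℂ) ^ (s - 1) • ψ x) = 0 := key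
  rw [integral_add h1int (conv hψ s), integral_smul] at key2
  have hm : mellin φ s = ∫ x in Set.Ioi (0:ℝ), (x:ℂ) ^ (s - 1) • φ x := rfl
  have hm' : mellin ψ s = ∫ x in Set.Ioi (0:ℝ), (x:ℂ) ^ (s - 1) • ψ x := rfl
  rw [← hm, ← hm', smul_eq_mul] at key2
  linear_combination key2


lemma decay {φ : ℝ → ℂ} (hφ : SchwartzRPlus φ) (α : ℕ) (a b : ℝ) :
    ∃ M : ℝ, 0 ≤ M ∧ ∀ s : ℂ, a ≤ s.re → s.re ≤ b →
      ‖s‖ ^ α * ‖mellin φ s‖ ≤ M := by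
  induction α generalizing φ with
  | zero =>
    obtain ⟨M, hM0, hM⟩ := strip_bound hφ a b
    exact ⟨M, hM0, fun s ha hb => by simpa using hM s ha hb⟩
  | succ n ih =>
    obtain ⟨M, hM0, hM⟩ := ih (schwartz_D hφ)
    refine ⟨M, hM0, fun s ha hb => ?_⟩
    have hrel := mellin_deriv_rel hφ s
    have h1 : ‖s‖ * ‖mellin φ s‖
        = ‖mellin (fun x : ℝ => (x:ℂ) * deriv φ x) s‖ := by
      rw [← norm_mul, hrel, norm_neg]
    calc ‖s‖ ^ (n+1) * ‖mellin φ s‖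
        = ‖s‖ ^ n * (‖s‖ * ‖mellin φ s‖) := by ring
      _ = ‖s‖ ^ n * ‖mellin (fun x : ℝ => (x:ℂ) * deriv φ x) s‖ := by
          rw [h1]
      _ ≤ M := hM s ha hb

end Stmt5Aux


end Stmt5AuxSection

/-- For `φ` Schwartz on `ℝ₊`: (a) the Mellin transform
`𝓜φ(s) = ∫_0^∞ φ(x)x^{s−1}dx` converges absolutely for every `s`; (b) it is entire;
(c) it decays rapidly on vertical strips. -/
theorem stmt_5 (φ : ℝ → ℂ) (hφ : SchwartzRPlus φ) :
    (∀ s : ℂ, IntegrableOn (fun x : ℝ => (x : ℂ) ^ (s - 1) • φ x) (Set.Ioi 0)) ∧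
      Differentiable ℂ (mellin φ) ∧
      ∀ (α : ℕ) (a b : ℝ), a ≤ b → ∃ C > 0, ∀ s : ℂ, a ≤ s.re → s.re ≤ b →
        ‖mellin φ s‖ ≤ C * (1 + |s.im|) ^ (-(α : ℝ)) := by
  refine ⟨Stmt5Aux.conv hφ, Stmt5Aux.diff hφ, ?_⟩
  intro α a b _
  obtain ⟨M0, hM00, hM0⟩ := Stmt5Aux.decay hφ 0 a b
  obtain ⟨Mα, hMα0, hMα⟩ := Stmt5Aux.decay hφ α a b
  refine ⟨max M0 Mα * 2 ^ α + 1, by positivity, ?_⟩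
  intro s ha hb
  have him : (0:ℝ) < 1 + |s.im| := by positivity
  have hrw : (1 + |s.im|) ^ (-(α:ℝ)) = ((1 + |s.im|) ^ α)⁻¹ := by
    rw [← Real.rpow_natCast (1 + |s.im|) α, ← Real.rpow_neg him.le]
  rw [hrw, ← div_eq_mul_inv, le_div_iff₀ (by positivity)]
  rcases le_total |s.im| 1 with him1 | him1
  · have h1 : (1 + |s.im|) ^ α ≤ 2 ^ α :=
      pow_le_pow_left₀ (by positivity) (by linarith) α
    have h2 : ‖mellin φ s‖ ≤ M0 := by simpa using hM0 s ha hb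
    calc ‖mellin φ s‖ * (1 + |s.im|) ^ α
        ≤ M0 * 2 ^ α := by
          apply mul_le_mul h2 h1 (by positivity) hM00
      _ ≤ max M0 Mα * 2 ^ α + 1 := by
          have : M0 ≤ max M0 Mα := le_max_left _ _
          nlinarith [pow_pos (by norm_num : (0:ℝ) < 2) α]
  · have habs : |s.im| ≤ ‖s‖ := Complex.abs_im_le_norm s
    have h1 : (1 + |s.im|) ^ α ≤ 2 ^ α * ‖s‖ ^ α := by
      rw [← mul_pow]
      apply pow_le_pow_left₀ (by positivity)
      have : |s.im| ≤ 2 * |s.im| - 1 := by linarith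
      calc 1 + |s.im| ≤ 2 * |s.im| := by linarith
        _ ≤ 2 * ‖s‖ := by linarith
    calc ‖mellin φ s‖ * (1 + |s.im|) ^ α
        ≤ ‖mellin φ s‖ * (2 ^ α * ‖s‖ ^ α) :=
          mul_le_mul_of_nonneg_left h1 (by positivity)
      _ = (‖s‖ ^ α * ‖mellin φ s‖) * 2 ^ α := by ring
      _ ≤ Mα * 2 ^ α := by
          apply mul_le_mul_of_nonneg_right (hMα s ha hb) (by positivity)
      _ ≤ max M0 Mα * 2 ^ α + 1 := by
          have : Mα ≤ max M0 Mα := le_max_right _ _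
          nlinarith [pow_pos (by norm_num : (0:ℝ) < 2) α]
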